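/- arXiv:2401.10818 — 3 statements merged into one kernel-verified Lean document; each statement's English description precedes it below -/
import Mathlib

section
/- Let α ∈ (−1,0), λ > 0, and let n ≥ 1 be an integer such that (λn)^{−1/α} ≤ n/2 and (λn/4)^{−1/α} ≥ 2. Consider the clique infection chain on {0,…,n} started at X₀ = 1, and set m = ⌊(λn/4)^{−1/α}⌋. Then the expected survival time satisfies E[T] ≥ (2^m − 1)/2. -/
open scoped ENNReal
open Filter Asymptotics

noncomputable def markovDist {S : Type*} [DecidableEq S] (step : S → S → ℝ≥0∞) (s0 : S) :
    ℕ → S → ℝ≥0∞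
  | 0 => fun J => if J = s0 then 1 else 0
  | t + 1 => fun J => ∑' s : S, markovDist step s0 t s * step s J

open Classical in
noncomputable def absorbStep {S : Type*} (A : Set S) (step : S → S → ℝ≥0∞) :
    S → S → ℝ≥0∞ :=
  fun s => if s ∈ A then (fun J => if J = s then 1 else 0) else step s

noncomputable def hitProb {S : Type*} [DecidableEq S] (step : S → S → ℝ≥0∞) (s0 : S)
    (A : Set S) : ℝ≥0∞ :=
  ⨆ t : ℕ, ∑' s : S, A.indicator (markovDist (absorbStep A step) s0 t) s

noncomputable def cliqueStep (n : ℕ) (lam alpha : ℝ) (I : ℕ) : ℕ → ℝ≥0∞ :=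
  if I = 0 ∨ n < I then fun J => if J = I then 1 else 0
  else fun J =>
    if J = I + 1 then
      ENNReal.ofReal (lam * (I : ℝ) ^ (1 + alpha) * ((n : ℝ) - I) /
        (lam * (I : ℝ) ^ (1 + alpha) * ((n : ℝ) - I) + I))
    else if J = I - 1 then
      ENNReal.ofReal ((I : ℝ) /
        (lam * (I : ℝ) ^ (1 + alpha) * ((n : ℝ) - I) + I))
    else 0

noncomputable def cliqueDist (n : ℕ) (lam alpha : ℝ) (x0 : ℕ) : ℕ → ℕ → ℝ≥0∞ :=
  markovDist (cliqueStep n lam alpha) x0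

noncomputable def cliqueET (n : ℕ) (lam alpha : ℝ) (x0 : ℕ) : ℝ≥0∞ :=
  ∑' t : ℕ, (1 - cliqueDist n lam alpha x0 t 0)

/-!
A bounded function `f` with `f 0 = 0` and `f ≤ 1 + P f` away from `0` bounds the expected time
spent off `0` from below, by telescoping `E f(X_t) ≤ P(X_t ≠ 0) + E f(X_{t+1})`. For the clique
chain, on `1 ≤ I ≤ m` the birth rate is at least twice the death rate, since there `I^α ≥ 4/(λn)`
and `n - I ≥ n/2`, so each step goes up with probability at least `2/3`. The potential
`f I = 2^(m+1) - 2^(m+1-min I m)`, whose increments halve up to `m` and vanish beyond it,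
satisfies the drift inequality and has `f 1 = 2^m`.
-/
open Topology

section MarkovChain

variable {S : Type*} [DecidableEq S] (step : S → S → ℝ≥0∞) (s0 : S)

lemma tsum_markovDist_zero_mul (f : S → ℝ≥0∞) :
    ∑' s, markovDist step s0 0 s * f s = f s0 := by
  rw [tsum_eq_single s0 fun s hs => by simp [markovDist, hs]]
  simp [markovDist]

lemma tsum_markovDist_succ_mul (t : ℕ) (f : S → ℝ≥0∞) :
    ∑' s, markovDist step s0 (t + 1) s * f s =
      ∑' s, markovDist step s0 t s * ∑' J, step s J * f J := by
  simp only [markovDist, ← ENNReal.tsum_mul_right, ← ENNReal.tsum_mul_left, mul_assoc]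
  exact ENNReal.tsum_comm

variable {step}

lemma tsum_markovDist_le_one (hstep : ∀ s, ∑' J, step s J ≤ 1) (t : ℕ) :
    ∑' s, markovDist step s0 t s ≤ 1 := by
  induction t with
  | zero => simpa using (tsum_markovDist_zero_mul step s0 1).le
  | succ t ih =>
    calc ∑' s, markovDist step s0 (t + 1) s
        = ∑' s, markovDist step s0 t s * ∑' J, step s J := by
          simpa using tsum_markovDist_succ_mul step s0 t 1
      _ ≤ ∑' s, markovDist step s0 t s :=
          ENNReal.tsum_le_tsum fun s => mul_le_of_le_one_right' (hstep s)
      _ ≤ 1 := ih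

lemma tsum_ite_markovDist_le (hstep : ∀ s, ∑' J, step s J ≤ 1) (t : ℕ) (a : S) :
    ∑' s, (if s = a then 0 else markovDist step s0 t s) ≤ 1 - markovDist step s0 t a := by
  have hmass := tsum_markovDist_le_one s0 hstep t
  rw [ENNReal.tsum_eq_add_tsum_ite a] at hmass
  exact ENNReal.le_sub_of_add_le_left (ne_top_of_le_ne_top ENNReal.one_ne_top
    (le_self_add.trans hmass)) (by convert hmass)

lemma tsum_markovDist_mul_le_of_drift {a : S} {f : S → ℝ≥0∞} (hfa : f a = 0)
    (hdrift : ∀ s, s ≠ a → f s ≤ 1 + ∑' J, step s J * f J) (t : ℕ) :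
    ∑' s, markovDist step s0 t s * f s ≤
      ∑' s, (if s = a then 0 else markovDist step s0 t s) +
        ∑' s, markovDist step s0 (t + 1) s * f s := by
  rw [tsum_markovDist_succ_mul, ← ENNReal.tsum_add]
  refine ENNReal.tsum_le_tsum fun s => ?_
  by_cases hs : s = a
  · simp [hs, hfa]
  · simpa [hs, mul_add] using mul_le_mul_right (hdrift s hs) (markovDist step s0 t s)

lemma le_tsum_of_le_sum_range_add_mul {P : ℕ → ℝ≥0∞} {c M : ℝ≥0∞} (hM : M ≠ ⊤)
    (h : ∀ N, c ≤ ∑ t ∈ Finset.range N, P t + M * P N) : c ≤ ∑' t, P t := by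
  by_cases htop : ∑' t, P t = ⊤
  · simp [htop]
  have hlim : Tendsto (fun N => ∑ t ∈ Finset.range N, P t + M * P N) atTop
      (𝓝 (∑' t, P t)) := by
    simpa using (ENNReal.tendsto_nat_tsum P).add
      (ENNReal.Tendsto.const_mul (ENNReal.tendsto_atTop_zero_of_tsum_ne_top htop) (Or.inr hM))
  exact ge_of_tendsto' hlim h

theorem le_tsum_one_sub_markovDist_of_drift (hstep : ∀ s, ∑' J, step s J ≤ 1) {a : S}
    {f : S → ℝ≥0∞} {M : ℝ≥0∞} (hM : M ≠ ⊤) (hfM : ∀ s, f s ≤ M) (hfa : f a = 0)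
    (hdrift : ∀ s, s ≠ a → f s ≤ 1 + ∑' J, step s J * f J) :
    f s0 ≤ ∑' t, (1 - markovDist step s0 t a) := by
  set E : ℕ → ℝ≥0∞ := fun t => ∑' s, markovDist step s0 t s * f s
  have hE : ∀ t, E t ≤ (1 - markovDist step s0 t a) + E (t + 1) := fun t =>
    (tsum_markovDist_mul_le_of_drift s0 hfa hdrift t).trans
      (add_le_add_left (tsum_ite_markovDist_le s0 hstep t a) _)
  have hEM : ∀ t, E t ≤ M * (1 - markovDist step s0 t a) := fun t =>
    calc E t ≤ ∑' s, (if s = a then 0 else markovDist step s0 t s) * M :=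
          ENNReal.tsum_le_tsum fun s => by
            by_cases hs : s = a
            · simp [hs, hfa]
            · simpa [hs] using mul_le_mul_right (hfM s) (markovDist step s0 t s)
      _ ≤ M * (1 - markovDist step s0 t a) := by
          rw [ENNReal.tsum_mul_right, mul_comm]
          exact mul_le_mul_right (tsum_ite_markovDist_le s0 hstep t a) M
  refine le_tsum_of_le_sum_range_add_mul hM fun N => ?_
  suffices htel : f s0 ≤ ∑ t ∈ Finset.range N, (1 - markovDist step s0 t a) + E N from
    htel.trans (add_le_add_right (hEM N) _)
  induction N with
  | zero => simp [E, tsum_markovDist_zero_mul]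
  | succ N ih =>
    rw [Finset.sum_range_succ, add_assoc]
    exact ih.trans (add_le_add_right (hE N) _)

end MarkovChain

section SurvivalPotential

def survivalPotential (m I : ℕ) : ℕ := 2 ^ (m + 1) - 2 ^ (m + 1 - min I m)

variable {m I : ℕ}

lemma survivalPotential_zero (m : ℕ) : survivalPotential m 0 = 0 := by
  simp [survivalPotential]

lemma survivalPotential_le (m I : ℕ) : survivalPotential m I ≤ 2 ^ (m + 1) := Nat.sub_le _ _

lemma survivalPotential_succ_of_lt (h : I < m) :
    survivalPotential m (I + 1) = survivalPotential m I + 2 ^ (m - I) := by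
  have hle : 2 ^ (m - I) * 2 ≤ 2 ^ (m + 1) := by
    rw [← pow_succ]; exact Nat.pow_le_pow_right two_pos (by omega)
  rw [survivalPotential, survivalPotential, min_eq_left h, min_eq_left h.le,
    show m + 1 - (I + 1) = m - I by omega, show m + 1 - I = m - I + 1 by omega, pow_succ]
  omega

lemma survivalPotential_succ_of_le (h : m ≤ I) :
    survivalPotential m (I + 1) = survivalPotential m I := by
  rw [survivalPotential, survivalPotential, min_eq_right h, min_eq_right (by omega)]

lemma survivalPotential_one (hm : 0 < m) : survivalPotential m 1 = 2 ^ m := by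
  simpa [survivalPotential_zero] using survivalPotential_succ_of_lt hm

lemma survivalPotential_le_one_add (hI : 1 ≤ I) {p q : ℝ} (hpq : p + q = 1)
    (hbias : I ≤ m → 2 * q ≤ p) :
    (survivalPotential m I : ℝ) ≤
      1 + p * survivalPotential m (I + 1) + q * survivalPotential m (I - 1) := by
  obtain ⟨J, rfl⟩ : ∃ J, I = J + 1 := ⟨I - 1, by omega⟩
  rw [Nat.add_sub_cancel]
  rcases lt_trichotomy (J + 1) m with hlt | rfl | hgt
  · have hp := hbias hlt.le
    rw [survivalPotential_succ_of_lt hlt, survivalPotential_succ_of_lt (by omega : J < m),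
      show m - J = m - (J + 1) + 1 by omega, pow_succ]
    have he : (0 : ℝ) ≤ 2 ^ (m - (J + 1)) := by positivity
    push_cast
    nlinarith
  · have hp := hbias le_rfl
    rw [survivalPotential_succ_of_le le_rfl, survivalPotential_succ_of_lt (by omega : J < J + 1),
      show J + 1 - J = 1 by omega]
    push_cast
    nlinarith
  · rw [survivalPotential_succ_of_le hgt.le, survivalPotential_succ_of_le (by omega : m ≤ J)]
    nlinarith

end SurvivalPotential

lemma natCast_le_one_add_ofReal_mul_add_ofReal_mul {p q : ℝ} (hp : 0 ≤ p) (hq : 0 ≤ q)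
    {a b c : ℕ} (h : (a : ℝ) ≤ 1 + p * b + q * c) :
    (a : ℝ≥0∞) ≤ 1 + (ENNReal.ofReal p * b + ENNReal.ofReal q * c) := by
  calc (a : ℝ≥0∞) = ENNReal.ofReal a := (ENNReal.ofReal_natCast a).symm
    _ ≤ ENNReal.ofReal (1 + p * b + q * c) := ENNReal.ofReal_le_ofReal h
    _ = 1 + (ENNReal.ofReal p * b + ENNReal.ofReal q * c) := by
        rw [← add_assoc, ENNReal.ofReal_add (by positivity) (by positivity),
          ENNReal.ofReal_add zero_le_one (by positivity), ENNReal.ofReal_one,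
          ENNReal.ofReal_mul hp, ENNReal.ofReal_mul hq, ENNReal.ofReal_natCast,
          ENNReal.ofReal_natCast]

lemma ofReal_div_add_ofReal_div {b c : ℝ} (hb : 0 ≤ b) (hc : 0 < c) :
    ENNReal.ofReal (b / (b + c)) + ENNReal.ofReal (c / (b + c)) = 1 := by
  have hbc : 0 < b + c := by linarith
  rw [← ENNReal.ofReal_add (by positivity) (by positivity), ← add_div, div_self hbc.ne',
    ENNReal.ofReal_one]

lemma inv_le_rpow_of_le_rpow_neg_inv {alpha c x : ℝ} (hc : 0 < c) (ha : alpha < 0)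
    (hx : 0 < x) (hxc : x ≤ c ^ (-1 / alpha)) : c⁻¹ ≤ x ^ alpha := by
  calc c⁻¹ = (c ^ (-1 / alpha)) ^ alpha := by
        rw [← Real.rpow_mul hc.le, div_mul_cancel₀ _ ha.ne, Real.rpow_neg_one]
    _ ≤ x ^ alpha := Real.rpow_le_rpow_of_nonpos hx hxc ha.le

section CliqueChain

variable {n : ℕ} {lam alpha : ℝ} {I : ℕ}

noncomputable def cliqueBirthRate (n : ℕ) (lam alpha : ℝ) (I : ℕ) : ℝ :=
  lam * (I : ℝ) ^ (1 + alpha) * ((n : ℝ) - I)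

lemma cliqueBirthRate_nonneg (hlam : 0 ≤ lam) (hIn : I ≤ n) :
    0 ≤ cliqueBirthRate n lam alpha I := by
  have : (I : ℝ) ≤ n := by exact_mod_cast hIn
  unfold cliqueBirthRate
  have := Real.rpow_nonneg (Nat.cast_nonneg I) (1 + alpha)
  apply mul_nonneg <;> [positivity; linarith]

lemma tsum_cliqueStep_mul_of_absorbing (hI : I = 0 ∨ n < I) (f : ℕ → ℝ≥0∞) :
    ∑' J, cliqueStep n lam alpha I J * f J = f I := by
  rw [cliqueStep, if_pos hI, tsum_eq_single I fun J hJ => by simp [hJ]]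
  simp

lemma tsum_cliqueStep_mul (hI0 : I ≠ 0) (hIn : I ≤ n) (f : ℕ → ℝ≥0∞) :
    ∑' J, cliqueStep n lam alpha I J * f J =
      ENNReal.ofReal (cliqueBirthRate n lam alpha I / (cliqueBirthRate n lam alpha I + I)) *
          f (I + 1) +
        ENNReal.ofReal (I / (cliqueBirthRate n lam alpha I + I)) * f (I - 1) := by
  have hne : I + 1 ≠ I - 1 := by omega
  rw [cliqueStep, if_neg (by omega), tsum_eq_sum (s := {I + 1, I - 1}) fun J hJ => by
    simp only [Finset.mem_insert, Finset.mem_singleton, not_or] at hJ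
    simp [hJ.1, hJ.2], Finset.sum_pair hne]
  simp [hne.symm, cliqueBirthRate]

lemma tsum_cliqueStep (hlam : 0 ≤ lam) (I : ℕ) : ∑' J, cliqueStep n lam alpha I J = 1 := by
  by_cases hI : I = 0 ∨ n < I
  · simpa using tsum_cliqueStep_mul_of_absorbing hI 1
  · push Not at hI
    have hI0 : (0 : ℝ) < I := by exact_mod_cast Nat.pos_of_ne_zero hI.1
    rw [← ofReal_div_add_ofReal_div (cliqueBirthRate_nonneg hlam hI.2) hI0]
    simpa using tsum_cliqueStep_mul hI.1 hI.2 1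

lemma two_mul_le_cliqueBirthRate (hlam : 0 < lam) (ha : alpha < 0) (hI : 1 ≤ I)
    (hIc : (I : ℝ) ≤ (lam * n / 4) ^ (-1 / alpha)) (hIn : 2 * I ≤ n) :
    2 * (I : ℝ) ≤ cliqueBirthRate n lam alpha I := by
  have hI' : (0 : ℝ) < I := by exact_mod_cast hI
  have hn : (0 : ℝ) < n := by exact_mod_cast (by omega : 0 < n)
  have hIn' : (2 * I : ℝ) ≤ n := by exact_mod_cast hIn
  have hpow : 4 / (lam * n) ≤ (I : ℝ) ^ alpha := by
    simpa using inv_le_rpow_of_le_rpow_neg_inv (by positivity) ha hI' hIc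
  calc 2 * (I : ℝ) = lam * I * (4 / (lam * n)) * (n / 2) := by field_simp; ring
    _ ≤ lam * I * (I : ℝ) ^ alpha * ((n : ℝ) - I) := by gcongr; linarith
    _ = cliqueBirthRate n lam alpha I := by
        rw [cliqueBirthRate, Real.rpow_add hI', Real.rpow_one]; ring

lemma survivalPotential_le_one_add_tsum_cliqueStep {m : ℕ} (hlam : 0 ≤ lam)
    (hbias : ∀ i, 1 ≤ i → i ≤ m → 2 * (i : ℝ) ≤ cliqueBirthRate n lam alpha i) (hI : I ≠ 0) :
    (survivalPotential m I : ℝ≥0∞) ≤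
      1 + ∑' J, cliqueStep n lam alpha I J * survivalPotential m J := by
  by_cases hIn : n < I
  · rw [tsum_cliqueStep_mul_of_absorbing (Or.inr hIn)]
    exact le_add_self
  push Not at hIn
  rw [tsum_cliqueStep_mul hI hIn]
  have hb := cliqueBirthRate_nonneg (alpha := alpha) hlam hIn
  have hbI : 0 < cliqueBirthRate n lam alpha I + I := by
    have : (0 : ℝ) < I := by exact_mod_cast Nat.pos_of_ne_zero hI
    linarith
  refine natCast_le_one_add_ofReal_mul_add_ofReal_mul (by positivity) (by positivity)
    (survivalPotential_le_one_add (Nat.one_le_iff_ne_zero.2 hI) ?_ fun hIm => ?_)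
  · rw [← add_div, div_self hbI.ne']
  · rw [← mul_div_assoc]
    exact div_le_div_of_nonneg_right (hbias I (Nat.one_le_iff_ne_zero.2 hI) hIm) hbI.le

theorem survivalPotential_le_cliqueET {m : ℕ} (hlam : 0 ≤ lam)
    (hbias : ∀ i, 1 ≤ i → i ≤ m → 2 * (i : ℝ) ≤ cliqueBirthRate n lam alpha i) (x0 : ℕ) :
    (survivalPotential m x0 : ℝ≥0∞) ≤ cliqueET n lam alpha x0 :=
  le_tsum_one_sub_markovDist_of_drift x0 (fun I => (tsum_cliqueStep hlam I).le)
    (M := ((2 ^ (m + 1) : ℕ) : ℝ≥0∞)) (ENNReal.natCast_ne_top _)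
    (fun I => by exact_mod_cast survivalPotential_le m I) (by simp [survivalPotential_zero])
    fun _ hI => survivalPotential_le_one_add_tsum_cliqueStep hlam hbias hI

end CliqueChain

theorem clique_sublinear_survival_lower_general (n : ℕ) (lam alpha : ℝ)
    (hlam : 0 < lam) (ha2 : alpha < 0)
    (h1 : (lam * n) ^ (-1 / alpha) ≤ (n : ℝ) / 2)
    (h2 : (2 : ℝ) ≤ (lam * n / 4) ^ (-1 / alpha)) :
    ENNReal.ofReal (((2 : ℝ) ^ ⌊(lam * n / 4) ^ (-1 / alpha)⌋₊ - 1) / 2) ≤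
      cliqueET n lam alpha 1 := by
  set X := (lam * n / 4) ^ (-1 / alpha)
  set m := ⌊X⌋₊
  have hm : 0 < m := Nat.floor_pos.2 (by linarith)
  have hXn : X ≤ n / 2 :=
    (Real.rpow_le_rpow (by positivity) (by linarith [mul_nonneg hlam.le n.cast_nonneg])
      (div_nonneg_of_nonpos (by norm_num) ha2.le)).trans h1
  have hbias : ∀ i, 1 ≤ i → i ≤ m → 2 * (i : ℝ) ≤ cliqueBirthRate n lam alpha i := by
    intro i hi him
    have hiX : (i : ℝ) ≤ X := (Nat.cast_le.2 him).trans (Nat.floor_le (by linarith))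
    have hin : (2 * i : ℝ) ≤ n := by linarith
    exact two_mul_le_cliqueBirthRate hlam ha2 hi hiX (by exact_mod_cast hin)
  calc ENNReal.ofReal ((2 ^ m - 1) / 2) ≤ ENNReal.ofReal (2 ^ m) :=
        ENNReal.ofReal_le_ofReal (by linarith [one_le_pow₀ (M₀ := ℝ) one_le_two (n := m)])
    _ = (survivalPotential m 1 : ℝ≥0∞) := by
        rw [survivalPotential_one hm, ← ENNReal.ofReal_natCast]; push_cast; rfl
    _ ≤ cliqueET n lam alpha 1 := survivalPotential_le_cliqueET hlam.le hbias 1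

/-- Lower bound on expected survival time of the sub-linear clique
infection chain started at one infected vertex. -/
theorem clique_sublinear_survival_lower (n : ℕ) (lam alpha : ℝ)
    (hn : 1 ≤ n) (hlam : 0 < lam) (ha1 : -1 < alpha) (ha2 : alpha < 0)
    (h1 : (lam * n) ^ (-1 / alpha) ≤ (n : ℝ) / 2)
    (h2 : (2 : ℝ) ≤ (lam * n / 4) ^ (-1 / alpha)) :
    ENNReal.ofReal (((2 : ℝ) ^ ⌊(lam * n / 4) ^ (-1 / alpha)⌋₊ - 1) / 2) ≤
      cliqueET n lam alpha 1 :=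
  clique_sublinear_survival_lower_general n lam alpha hlam ha2 h1 h2
end

section
/- Let α ∈ (−1,0). There exists a constant C > 0 depending only on α such that for every integer n ≥ 1 and every λ > 0 with λn ≥ 2, the clique infection chain on {0,…,n} started at X₀ = 1 has expected survival time E[T] ≤ C·(λn)^{C·(λn)^{−1/α}}. -/
open scoped ENNReal
open Filter Asymptotics

/-!
A potential `F` on the states whose expected value drops by at least one at every step taken
away from `z` bounds `∑ₜ P(Xₜ ≠ z)` by `F(X₀)` (Foster–Lyapunov). For the clique chain take
`F(s) = d₁ + ⋯ + dₛ`: the drift condition at `s` reduces to `1 + rₛ (1 + dₛ₊₁) ≤ dₛ`, where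
`rₛ = λ n s^α ≥ b(s) / s` bounds the per-capita infection rate. Since `α < 0`, `rₛ ≤ 1/2` as
soon as `s ≥ M = ⌈(2λn)^(-1/α)⌉`, so constant increments `dₛ = (λn)³` suffice there, while
below `M` the increments may grow geometrically with ratio `(λn)³`. Hence
`E[T] ≤ d₁ = (λn)^(3M)`, which is of the claimed form.
-/

namespace MarkovChain

variable {S : Type*} [DecidableEq S] {step : S → S → ℝ≥0∞}

theorem tsum_markovDist_succ_mul (x0 : S) (t : ℕ) (g : S → ℝ≥0∞) :
    ∑' J, markovDist step x0 (t + 1) J * g J =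
      ∑' s, markovDist step x0 t s * ∑' J, step s J * g J := by
  calc ∑' J, markovDist step x0 (t + 1) J * g J
      = ∑' J, ∑' s, markovDist step x0 t s * step s J * g J := by
        simp only [markovDist, ← ENNReal.tsum_mul_right]
    _ = ∑' s, markovDist step x0 t s * ∑' J, step s J * g J := by
        rw [ENNReal.tsum_comm]
        simp only [mul_assoc, ENNReal.tsum_mul_left]

theorem tsum_markovDist_zero_mul (x0 : S) (g : S → ℝ≥0∞) :
    ∑' J, markovDist step x0 0 J * g J = g x0 := by
  simp [markovDist]

theorem tsum_markovDist (hrow : ∀ s, ∑' J, step s J = 1) (x0 : S) (t : ℕ) :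
    ∑' s, markovDist step x0 t s = 1 := by
  induction t with
  | zero => simpa using tsum_markovDist_zero_mul (step := step) x0 1
  | succ t ih => simpa [hrow, ih] using tsum_markovDist_succ_mul (step := step) x0 t 1

theorem tsum_one_sub_markovDist_le (hrow : ∀ s, ∑' J, step s J = 1) {z : S} {F : S → ℝ≥0∞}
    (hz : ∑' J, step z J * F J ≤ F z)
    (hdrift : ∀ s, s ≠ z → ∑' J, step s J * F J + 1 ≤ F s) (x0 : S) :
    ∑' t, (1 - markovDist step x0 t z) ≤ F x0 := by
  set D := markovDist step x0
  set G : ℕ → ℝ≥0∞ := fun t => ∑' s, D t s * F s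
  have one_sub_le (t : ℕ) : 1 - D t z ≤ ∑' s, if s = z then 0 else D t s := by
    rw [tsub_le_iff_left, ← tsum_markovDist hrow x0 t]
    convert (ENNReal.tsum_eq_add_tsum_ite z).le
  have decrease (t : ℕ) : G (t + 1) + (1 - D t z) ≤ G t := by
    grw [one_sub_le t]
    rw [show G (t + 1) = _ from tsum_markovDist_succ_mul x0 t F, ← ENNReal.tsum_add]
    refine ENNReal.tsum_le_tsum fun s => ?_
    by_cases hs : s = z
    · subst hs
      simpa using mul_le_mul_right hz _
    · simpa [hs, mul_add] using mul_le_mul_right (hdrift s hs) (D t s)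
  have partial_sum (t : ℕ) : ∑ u ∈ Finset.range t, (1 - D u z) + G t ≤ F x0 := by
    induction t with
    | zero => simp [G, D, tsum_markovDist_zero_mul]
    | succ t ih =>
      calc ∑ u ∈ Finset.range (t + 1), (1 - D u z) + G (t + 1)
          = ∑ u ∈ Finset.range t, (1 - D u z) + (G (t + 1) + (1 - D t z)) := by
            rw [Finset.sum_range_succ]; ring
        _ ≤ F x0 := by grw [decrease t]; exact ih
  exact ENNReal.tsum_le_of_sum_range_le fun t => le_self_add.trans (partial_sum t)

end MarkovChain

theorem drift_le_of_increment {b s r d d' f : ℝ} (hs : 0 ≤ s) (hbr : b ≤ s * r)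
    (hd' : 0 ≤ d') (hd : 1 + r * (1 + d') ≤ d) :
    b * (f + d + d') + s * f + b + s ≤ (b + s) * (f + d) := by
  nlinarith [mul_le_mul_of_nonneg_right hbr (by linarith : 0 ≤ 1 + d'),
    mul_le_mul_of_nonneg_left hd hs]

section Sublinear

variable {x alpha : ℝ}

theorem mul_rpow_le_half (hx : 0 < x) (halpha : alpha < 0) {k : ℝ}
    (hk : (2 * x) ^ (-1 / alpha) ≤ k) : x * k ^ alpha ≤ 1 / 2 := by
  have h2x : 0 < (2 * x) ^ (-1 / alpha) := by positivity
  calc x * k ^ alpha ≤ x * ((2 * x) ^ (-1 / alpha)) ^ alpha := by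
        gcongr x * ?_
        exact Real.rpow_le_rpow_of_nonpos h2x hk halpha.le
    _ = 1 / 2 := by
        rw [← Real.rpow_mul (by positivity), div_mul_cancel₀ _ halpha.ne, Real.rpow_neg_one]
        field_simp

theorem one_add_mul_one_add_pow_le (hx : 2 ≤ x) {r : ℝ} {M k : ℕ} (hrx : r ≤ x)
    (hrM : M ≤ k → r ≤ 1 / 2) :
    1 + r * (1 + (x ^ 3) ^ (M - (k + 1) + 1)) ≤ (x ^ 3) ^ (M - k + 1) := by
  have hx3 : 4 * x ≤ x ^ 3 := by
    nlinarith [mul_nonneg (mul_nonneg (by linarith : 0 ≤ x) (by linarith : 0 ≤ x - 2))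
      (by linarith : 0 ≤ x + 2)]
  rcases lt_or_ge k M with hkM | hMk
  · set D := (x ^ 3) ^ (M - (k + 1) + 1)
    rw [show (x ^ 3) ^ (M - k + 1) = D * x ^ 3 by rw [← pow_succ]; congr 1; omega]
    have hD : x ^ 3 ≤ D := le_self_pow₀ (by nlinarith) (by omega)
    nlinarith [mul_le_mul_of_nonneg_right hrx (by nlinarith : 0 ≤ 1 + D),
      mul_le_mul_of_nonneg_left hx3 (by nlinarith : 0 ≤ D)]
  · rw [show M - (k + 1) = 0 by omega, show M - k = 0 by omega, zero_add, pow_one]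
    nlinarith [mul_le_mul_of_nonneg_right (hrM hMk) (by nlinarith : 0 ≤ 1 + x ^ 3)]

theorem pow_ceil_rpow_le (hx : 2 ≤ x) {e : ℝ} (he : 0 < e) :
    (x ^ 3) ^ ⌈(2 * x) ^ e⌉₊ ≤ 3 * (2 ^ e + 1) * x ^ (3 * (2 ^ e + 1) * x ^ e) := by
  have h2e : 0 < (2 : ℝ) ^ e := by positivity
  have hxe : 1 ≤ x ^ e := Real.one_le_rpow (by linarith) he.le
  have hM : 3 * (⌈(2 * x) ^ e⌉₊ : ℝ) ≤ 3 * (2 ^ e + 1) * x ^ e := by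
    have := Nat.ceil_lt_add_one (by positivity : 0 ≤ (2 * x) ^ e)
    rw [Real.mul_rpow zero_le_two (by linarith)] at this ⊢
    nlinarith
  calc (x ^ 3) ^ ⌈(2 * x) ^ e⌉₊ = x ^ (3 * (⌈(2 * x) ^ e⌉₊ : ℝ)) := by
        rw [← pow_mul, ← Real.rpow_natCast]; push_cast; rfl
    _ ≤ x ^ (3 * (2 ^ e + 1) * x ^ e) := Real.rpow_le_rpow_of_exponent_le (by linarith) hM
    _ ≤ 3 * (2 ^ e + 1) * x ^ (3 * (2 ^ e + 1) * x ^ e) :=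
        le_mul_of_one_le_left (by positivity) (by linarith)

end Sublinear

namespace CliqueChain

noncomputable def birthRate (n : ℕ) (lam alpha : ℝ) (I : ℕ) : ℝ :=
  lam * (I : ℝ) ^ (1 + alpha) * ((n : ℝ) - I)

variable {n : ℕ} {lam alpha : ℝ}

theorem birthRate_nonneg (hlam : 0 ≤ lam) {I : ℕ} (hI : I ≤ n) : 0 ≤ birthRate n lam alpha I :=
  mul_nonneg (by positivity) (sub_nonneg.2 (by exact_mod_cast hI))

theorem birthRate_add_pos (hlam : 0 ≤ lam) {I : ℕ} (hI : 1 ≤ I) (hIn : I ≤ n) :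
    0 < birthRate n lam alpha I + I := by
  have : (1 : ℝ) ≤ I := by exact_mod_cast hI
  linarith [birthRate_nonneg (alpha := alpha) hlam hIn]

theorem birthRate_le (hlam : 0 ≤ lam) {I : ℕ} (hI : 0 < I) :
    birthRate n lam alpha I ≤ I * (lam * n * (I : ℝ) ^ alpha) := by
  have hI' : (0 : ℝ) < I := by exact_mod_cast hI
  have hpow : 0 ≤ lam * (I * (I : ℝ) ^ alpha) := by positivity
  calc birthRate n lam alpha I = lam * (I * (I : ℝ) ^ alpha) * ((n : ℝ) - I) := by
        rw [birthRate, Real.rpow_add hI', Real.rpow_one]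
    _ ≤ lam * (I * (I : ℝ) ^ alpha) * n := by gcongr; linarith
    _ = I * (lam * n * (I : ℝ) ^ alpha) := by ring

theorem tsum_cliqueStep_mul_of_absorbing {I : ℕ} (hI : I = 0 ∨ n < I) (g : ℕ → ℝ≥0∞) :
    ∑' J, cliqueStep n lam alpha I J * g J = g I := by
  simp [cliqueStep, hI]

theorem tsum_cliqueStep_mul {I : ℕ} (hI : 1 ≤ I) (hIn : I ≤ n) (g : ℕ → ℝ≥0∞) :
    ∑' J, cliqueStep n lam alpha I J * g J =
      ENNReal.ofReal (birthRate n lam alpha I / (birthRate n lam alpha I + I)) * g (I + 1) +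
        ENNReal.ofReal (I / (birthRate n lam alpha I + I)) * g (I - 1) := by
  rw [cliqueStep, if_neg (by omega), tsum_eq_sum (s := {I + 1, I - 1}) (by
    intro J hJ
    simp only [Finset.mem_insert, Finset.mem_singleton, not_or] at hJ
    simp [hJ.1, hJ.2]),
    Finset.sum_pair (by omega)]
  simp [birthRate]

theorem tsum_cliqueStep (hlam : 0 ≤ lam) (I : ℕ) : ∑' J, cliqueStep n lam alpha I J = 1 := by
  by_cases hI : I = 0 ∨ n < I
  · simpa using tsum_cliqueStep_mul_of_absorbing (lam := lam) (alpha := alpha) hI 1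
  · have hb : 0 ≤ birthRate n lam alpha I := birthRate_nonneg hlam (by omega)
    have hpos : 0 < birthRate n lam alpha I + I := birthRate_add_pos hlam (by omega) (by omega)
    rw [← tsum_congr fun J => mul_one (cliqueStep n lam alpha I J),
      tsum_cliqueStep_mul (by omega) (by omega), mul_one, mul_one,
      ← ENNReal.ofReal_add (div_nonneg hb hpos.le) (by positivity), ← add_div, div_self hpos.ne',
      ENNReal.ofReal_one]

theorem cliqueET_le_of_drift (hn : 1 ≤ n) (hlam : 0 ≤ lam) {f : ℕ → ℝ} (hf : ∀ s, 0 ≤ f s)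
    (hdrift : ∀ s, 1 ≤ s → s ≤ n →
      birthRate n lam alpha s * f (s + 1) + s * f (s - 1) + birthRate n lam alpha s + s ≤
        (birthRate n lam alpha s + s) * f s) :
    cliqueET n lam alpha 1 ≤ ENNReal.ofReal (f 1) := by
  -- `⊤` beyond `n` makes the drift condition vacuous at the stuck states `s > n`.
  let F : ℕ → ℝ≥0∞ := fun s => if s ≤ n then ENNReal.ofReal (f s) else ⊤
  have drift_inner (s : ℕ) (hs : 1 ≤ s) (hsn : s ≤ n) :
      ∑' J, cliqueStep n lam alpha s J * F J + 1 ≤ F s := by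
    set b := birthRate n lam alpha s
    have hb : 0 ≤ b := birthRate_nonneg hlam hsn
    have hpos : 0 < b + s := birthRate_add_pos hlam hs hsn
    have up : ENNReal.ofReal (b / (b + s)) * F (s + 1) =
        ENNReal.ofReal (b / (b + s) * f (s + 1)) := by
      rcases hsn.lt_or_eq with hlt | rfl
      · simp [F, Nat.succ_le_of_lt hlt, ENNReal.ofReal_mul (div_nonneg hb hpos.le)]
      · simp [b, birthRate]
    have down : ENNReal.ofReal (s / (b + s)) * F (s - 1) =
        ENNReal.ofReal (s / (b + s) * f (s - 1)) := by
      simp [F, (Nat.sub_le s 1).trans hsn, ENNReal.ofReal_mul (div_nonneg s.cast_nonneg hpos.le)]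
    have real_drift : b / (b + s) * f (s + 1) + s / (b + s) * f (s - 1) + 1 ≤ f s := by
      rw [div_mul_eq_mul_div, div_mul_eq_mul_div, ← add_div, div_add_one hpos.ne',
        div_le_iff₀ hpos]
      linarith [hdrift s hs hsn]
    have hup : 0 ≤ b / (b + s) * f (s + 1) := mul_nonneg (div_nonneg hb hpos.le) (hf _)
    have hdown : 0 ≤ s / (b + s) * f (s - 1) := mul_nonneg (div_nonneg s.cast_nonneg hpos.le) (hf _)
    rw [tsum_cliqueStep_mul hs hsn, up, down, ← ENNReal.ofReal_one, ← ENNReal.ofReal_add hup hdown,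
      ← ENNReal.ofReal_add (add_nonneg hup hdown) zero_le_one]
    simpa [F, hsn] using ENNReal.ofReal_le_ofReal real_drift
  have hF1 : F 1 = ENNReal.ofReal (f 1) := if_pos hn
  rw [← hF1]
  refine MarkovChain.tsum_one_sub_markovDist_le (tsum_cliqueStep hlam)
    (tsum_cliqueStep_mul_of_absorbing (Or.inl rfl) F).le (fun s hs => ?_) 1
  rcases le_or_gt s n with hsn | hsn
  · exact drift_inner s (Nat.one_le_iff_ne_zero.2 hs) hsn
  · simp [F, hsn.not_ge]

theorem cliqueET_le_of_increment (hn : 1 ≤ n) (hlam : 0 ≤ lam) {d r : ℕ → ℝ}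
    (hd : ∀ k, 0 ≤ d k)
    (hbr : ∀ k, 1 ≤ k → k ≤ n → birthRate n lam alpha k ≤ k * r k)
    (hdr : ∀ k, 1 ≤ k → k ≤ n → 1 + r k * (1 + d (k + 1)) ≤ d k) :
    cliqueET n lam alpha 1 ≤ ENNReal.ofReal (d 1) := by
  have h := cliqueET_le_of_drift (alpha := alpha) hn hlam
    (f := fun s => ∑ k ∈ Finset.range s, d (k + 1))
    (fun s => Finset.sum_nonneg fun k _ => hd (k + 1)) (fun s hs hsn => ?_)
  · simpa using h
  obtain ⟨j, rfl⟩ : ∃ j, s = j + 1 := ⟨s - 1, by omega⟩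
  simp only [Finset.sum_range_succ, Nat.add_sub_cancel]
  exact drift_le_of_increment (Nat.cast_nonneg _) (hbr _ hs hsn) (hd _) (hdr _ hs hsn)

theorem cliqueET_le_pow_ceil (halpha : alpha < 0) (hn : 1 ≤ n)
    (hlam : 0 ≤ lam) (hx : 2 ≤ lam * n) :
    cliqueET n lam alpha 1 ≤
      ENNReal.ofReal (((lam * n) ^ 3) ^ ⌈(2 * (lam * n)) ^ (-1 / alpha)⌉₊) := by
  set x := lam * n
  set M := ⌈(2 * x) ^ (-1 / alpha)⌉₊
  have hM : 0 < M := Nat.ceil_pos.2 (by positivity)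
  have h := cliqueET_le_of_increment (alpha := alpha) hn hlam
    (d := fun k => (x ^ 3) ^ (M - k + 1)) (r := fun k => x * (k : ℝ) ^ alpha)
    (fun k => by positivity)
    (fun k hk _ => birthRate_le hlam hk)
    (fun k hk _ => one_add_mul_one_add_pow_le hx
      (mul_le_of_le_one_right (by positivity)
        (Real.rpow_le_one_of_one_le_of_nonpos (by exact_mod_cast hk) halpha.le))
      (fun hMk => mul_rpow_le_half (by positivity) halpha
        ((Nat.le_ceil _).trans (Nat.cast_le.2 hMk))))
  rwa [Nat.sub_add_cancel hM] at h

end CliqueChain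

theorem clique_sublinear_survival_upper_general (alpha : ℝ) (ha2 : alpha < 0) :
    ∃ C : ℝ, 0 < C ∧ ∀ (n : ℕ) (lam : ℝ), 1 ≤ n → 0 < lam → 2 ≤ lam * n →
      cliqueET n lam alpha 1 ≤
        ENNReal.ofReal (C * (lam * n) ^ (C * (lam * n) ^ (-1 / alpha))) := by
  have he : 0 < -1 / alpha := div_pos_of_neg_of_neg (by norm_num) ha2
  refine ⟨3 * (2 ^ (-1 / alpha) + 1), by positivity, fun n lam hn hlam hx => ?_⟩
  exact (CliqueChain.cliqueET_le_pow_ceil ha2 hn hlam.le hx).trans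
    (ENNReal.ofReal_le_ofReal (pow_ceil_rpow_le hx he))

/-- Upper bound on expected survival time of the sub-linear clique
infection chain started at one infected vertex, when λn ≥ 2. -/
theorem clique_sublinear_survival_upper (alpha : ℝ) (ha1 : -1 < alpha) (ha2 : alpha < 0) :
    ∃ C : ℝ, 0 < C ∧ ∀ (n : ℕ) (lam : ℝ), 1 ≤ n → 0 < lam → 2 ≤ lam * n →
      cliqueET n lam alpha 1 ≤
        ENNReal.ofReal (C * (lam * n) ^ (C * (lam * n) ^ (-1 / alpha))) :=
  clique_sublinear_survival_upper_general alpha ha2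
end

section
/- Let n ≥ 1 be an integer, λ > 0, α > −1, and let x, y be integers with 0 ≤ y < x ≤ n. In the star infection chain started at the state (0,x) (center healthy, x infected leaves), the probability p that the chain reaches a state with y infected leaves before the center becomes infected (i.e. before the first coordinate becomes 1) equals ∏_{i=y+1}^{x} 1/(1+λ·i^α). Moreover, setting z = y if α ≥ 0 and z = x if α < 0, if λ·z^α ≤ 1 then p ≤ exp(−(x−y)·λ·z^α/2). -/
open scoped ENNReal
open Filter Asymptotics

noncomputable def starStep (n : ℕ) (lam alpha : ℝ) : Bool × ℕ → Bool × ℕ → ℝ≥0∞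
  | (false, I) =>
    if I = 0 ∨ n < I then fun J => if J = ((false : Bool), I) then 1 else 0
    else fun J =>
      if J = (false, I - 1) then
        ENNReal.ofReal ((I : ℝ) / ((I : ℝ) + lam * (I : ℝ) ^ (1 + alpha)))
      else if J = (true, I) then
        ENNReal.ofReal (lam * (I : ℝ) ^ (1 + alpha) / ((I : ℝ) + lam * (I : ℝ) ^ (1 + alpha)))
      else 0
  | (true, I) =>
    if n < I then fun J => if J = ((true : Bool), I) then 1 else 0
    else fun J =>
      if J = (true, I + 1) then
        ENNReal.ofReal (lam * ((n : ℝ) - I) / (lam * ((n : ℝ) - I) + I + 1))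
      else if J = (true, I - 1) then
        ENNReal.ofReal ((I : ℝ) / (lam * ((n : ℝ) - I) + I + 1))
      else if J = (false, I) then
        ENNReal.ofReal (1 / (lam * ((n : ℝ) - I) + I + 1))
      else 0

noncomputable def starDist (n : ℕ) (lam alpha : ℝ) (s0 : Bool × ℕ) :
    ℕ → Bool × ℕ → ℝ≥0∞ :=
  markovDist (starStep n lam alpha) s0

noncomputable def starET (n : ℕ) (lam alpha : ℝ) (s0 : Bool × ℕ) : ℝ≥0∞ :=
  ∑' t : ℕ, (1 - starDist n lam alpha s0 t ((false : Bool), 0))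

/-! Stop the chain when the centre is infected or when it reaches `(false, y)`. From `(false, I)`
with `y < I` it then either loses a leaf, with probability `I / (I + λ I^(1+α)) = 1 / (1 + λ I^α)`,
or is stopped at `(true, I)`. So it reaches `(false, y)` only along the path `x, x - 1, …, y`, after
exactly `x - y` steps, with probability `∏_{i=y+1}^{x} 1 / (1 + λ i^α)`. Since `i ↦ i^α` is
monotone, each factor is at most `1 / (1 + c)` with `c = λ z^α ≤ 1`, and on `[0, 1]` we have
`exp (c / 2) ≤ 1 / (1 - c / 2) ≤ 1 + c`. -/

open Finset

section MarkovChain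

variable {S : Type*} [DecidableEq S] (step : S → S → ℝ≥0∞)

theorem markovDist_succ_eq_tsum_step_mul (t : ℕ) (s0 J : S) :
    markovDist step s0 (t + 1) J = ∑' s, step s0 s * markovDist step s t J := by
  induction t generalizing s0 J with
  | zero => simp [markovDist]
  | succ t ih =>
    calc markovDist step s0 (t + 1 + 1) J
        = ∑' s, ∑' u, step s0 u * markovDist step u t s * step s J := by
          simp only [markovDist] at ih ⊢
          simp only [ih, ENNReal.tsum_mul_right]
      _ = ∑' u, step s0 u * ∑' s, markovDist step u t s * step s J := by
          rw [ENNReal.tsum_comm]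
          simp only [← ENNReal.tsum_mul_left, mul_assoc]
      _ = ∑' u, step s0 u * markovDist step u (t + 1) J := rfl

theorem markovDist_eq_of_step_eq_dirac {s0 : S} (h : ∀ J, step s0 J = if J = s0 then 1 else 0)
    (t : ℕ) (J : S) : markovDist step s0 t J = if J = s0 then 1 else 0 := by
  induction t generalizing J with
  | zero => rfl
  | succ t ih =>
    rw [markovDist_succ_eq_tsum_step_mul, tsum_eq_single s0 fun s hs => by simp [h, hs]]
    simp [h, ih]

theorem hitProb_singleton (s0 a : S) :
    hitProb step s0 {a} = ⨆ t, markovDist (absorbStep {a} step) s0 t a := by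
  simp only [hitProb]
  congr 1
  funext t
  rw [tsum_eq_single a fun s hs => Set.indicator_of_notMem (Set.notMem_singleton_iff.2 hs) _]
  exact Set.indicator_of_mem rfl _

end MarkovChain

section StarDrop

variable (n : ℕ) (lam alpha : ℝ) (y : ℕ)

noncomputable def starDropStep : Bool × ℕ → Bool × ℕ → ℝ≥0∞ :=
  absorbStep {((false : Bool), y)} (absorbStep {s : Bool × ℕ | s.1 = true} (starStep n lam alpha))

theorem starDropStep_target (J : Bool × ℕ) :
    starDropStep n lam alpha y (false, y) J = if J = (false, y) then 1 else 0 := by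
  simp [starDropStep, absorbStep]

theorem starDropStep_center (I : ℕ) (J : Bool × ℕ) :
    starDropStep n lam alpha y (true, I) J = if J = (true, I) then 1 else 0 := by
  simp [starDropStep, absorbStep]

variable {n lam alpha y}

theorem starDropStep_leaf {I : ℕ} (hyI : y ≤ I) :
    starDropStep n lam alpha y (false, I + 1) = starStep n lam alpha (false, I + 1) := by
  have hy : ((false : Bool), I + 1) ∉ ({((false : Bool), y)} : Set (Bool × ℕ)) := by
    simp only [Set.mem_singleton_iff, Prod.mk.injEq]; omega
  simp [starDropStep, absorbStep, hy]

theorem starStep_leaf_pred {I : ℕ} (hIn : I + 1 ≤ n) :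
    starStep n lam alpha (false, I + 1) (false, I) =
      ENNReal.ofReal (1 / (1 + lam * ((I + 1 : ℕ) : ℝ) ^ alpha)) := by
  have hI : (0 : ℝ) < (I + 1 : ℕ) := by positivity
  simp only [starStep, if_neg (show ¬(I + 1 = 0 ∨ n < I + 1) by omega), if_pos,
    add_tsub_cancel_right]
  congr 1
  rw [Real.rpow_add hI, Real.rpow_one, ← mul_assoc, mul_comm lam, mul_assoc, ← mul_one_add,
    div_mul_eq_div_div, div_self hI.ne']

theorem starStep_leaf_eq_zero {I : ℕ} (hIn : I + 1 ≤ n) {J : Bool × ℕ} (hJ : J ≠ (false, I))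
    (hJ' : J ≠ (true, I + 1)) : starStep n lam alpha (false, I + 1) J = 0 := by
  simp [starStep, hJ, hJ', show ¬n ≤ I by omega]

theorem markovDist_starDropStep_leaf_succ {I : ℕ} (hyI : y ≤ I) (hIn : I + 1 ≤ n) (t : ℕ) :
    markovDist (starDropStep n lam alpha y) (false, I + 1) (t + 1) (false, y) =
      ENNReal.ofReal (1 / (1 + lam * ((I + 1 : ℕ) : ℝ) ^ alpha)) *
        markovDist (starDropStep n lam alpha y) (false, I) t (false, y) := by
  have hsupp : ∀ J ∉ ({(false, I), (true, I + 1)} : Finset (Bool × ℕ)),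
      starDropStep n lam alpha y (false, I + 1) J *
        markovDist (starDropStep n lam alpha y) J t (false, y) = 0 := by
    intro J hJ
    simp only [mem_insert, mem_singleton, not_or] at hJ
    rw [starDropStep_leaf hyI, starStep_leaf_eq_zero hIn hJ.1 hJ.2, zero_mul]
  rw [markovDist_succ_eq_tsum_step_mul, tsum_eq_sum hsupp, sum_pair (by simp),
    starDropStep_leaf hyI, starStep_leaf_pred hIn,
    markovDist_eq_of_step_eq_dirac _ (starDropStep_center n lam alpha y (I + 1)),
    if_neg (by simp), mul_zero, add_zero]

theorem markovDist_starDropStep_target (hlam : 0 ≤ lam) {I : ℕ} (hyI : y ≤ I) (hIn : I ≤ n)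
    (t : ℕ) : markovDist (starDropStep n lam alpha y) (false, I) t (false, y) =
      if I - y ≤ t then ENNReal.ofReal (∏ i ∈ Icc (y + 1) I, 1 / (1 + lam * (i : ℝ) ^ alpha))
      else 0 := by
  induction t generalizing I with
  | zero =>
    rcases hyI.eq_or_lt with rfl | hyI
    · simp [markovDist]
    · rw [if_neg (by omega)]
      simp [markovDist, hyI.ne]
  | succ t ih =>
    rcases hyI.eq_or_lt with rfl | hyI
    · rw [markovDist_eq_of_step_eq_dirac _ (starDropStep_target n lam alpha y)]
      simp
    obtain ⟨k, rfl⟩ : ∃ k, I = k + 1 := ⟨I - 1, by omega⟩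
    have hyk : y ≤ k := by omega
    rw [markovDist_starDropStep_leaf_succ hyk hIn, ih hyk (by omega),
      prod_Icc_succ_top (by omega), ENNReal.ofReal_mul' (by positivity), mul_ite, mul_zero,
      mul_comm]
    simp only [show k + 1 - y ≤ t + 1 ↔ k - y ≤ t by omega]

theorem hitProb_starStep_drop (hlam : 0 ≤ lam) {x : ℕ} (hyx : y ≤ x) (hxn : x ≤ n) :
    hitProb (absorbStep {s : Bool × ℕ | s.1 = true} (starStep n lam alpha)) (false, x)
        {(false, y)} =
      ENNReal.ofReal (∏ i ∈ Icc (y + 1) x, 1 / (1 + lam * (i : ℝ) ^ alpha)) := by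
  rw [hitProb_singleton]
  change ⨆ t, markovDist (starDropStep n lam alpha y) (false, x) t (false, y) = _
  simp only [markovDist_starDropStep_target hlam hyx hxn]
  refine le_antisymm (iSup_le fun t => ?_) (le_iSup_of_le (x - y) (by rw [if_pos le_rfl]))
  split_ifs <;> simp

end StarDrop

theorem one_div_one_add_le_exp_neg_half {c : ℝ} (hc0 : 0 ≤ c) (hc1 : c ≤ 1) :
    1 / (1 + c) ≤ Real.exp (-(c / 2)) := by
  have hexp : Real.exp (c / 2) ≤ 1 + c :=
    calc Real.exp (c / 2) ≤ 1 / (1 - c / 2) :=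
          Real.exp_bound_div_one_sub_of_interval (by positivity) (by linarith)
      _ ≤ 1 + c := by
          rw [div_le_iff₀ (by linarith)]
          nlinarith
  rw [Real.exp_neg, ← one_div]
  exact one_div_le_one_div_of_le (Real.exp_pos _) hexp

theorem prod_one_div_one_add_le_exp {ι : Type*} (s : Finset ι) {f : ι → ℝ} {c : ℝ} (hc0 : 0 ≤ c)
    (hc1 : c ≤ 1) (hf : ∀ i ∈ s, c ≤ f i) :
    ∏ i ∈ s, 1 / (1 + f i) ≤ Real.exp (-(#s * c / 2)) :=
  calc ∏ i ∈ s, 1 / (1 + f i)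
      ≤ ∏ _i ∈ s, Real.exp (-(c / 2)) := by
        refine prod_le_prod (fun i hi => ?_) fun i hi => ?_
        · exact one_div_nonneg.2 (by linarith [hf i hi])
        · exact (one_div_le_one_div_of_le (by linarith) (by linarith [hf i hi])).trans
            (one_div_one_add_le_exp_neg_half hc0 hc1)
    _ = Real.exp (-(#s * c / 2)) := by
        rw [prod_const, ← Real.exp_nat_mul]
        ring_nf

theorem ite_rpow_le_rpow {a b c : ℝ} (ha : 0 ≤ a) (hb : 0 < b) (hab : a ≤ b) (hbc : b ≤ c)
    (alpha : ℝ) : (if 0 ≤ alpha then a else c) ^ alpha ≤ b ^ alpha := by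
  split_ifs with halpha
  · exact Real.rpow_le_rpow ha hab halpha
  · exact Real.rpow_le_rpow_of_nonpos hb hbc (le_of_not_ge halpha)

theorem star_drop_probability_general (n x y : ℕ) (lam alpha : ℝ)
    (hlam : 0 < lam) (hyx : y < x) (hxn : x ≤ n) :
    hitProb (absorbStep {s : Bool × ℕ | s.1 = true} (starStep n lam alpha))
        ((false : Bool), x) {((false : Bool), y)} =
      ENNReal.ofReal (∏ i ∈ Finset.Icc (y + 1) x, 1 / (1 + lam * (i : ℝ) ^ alpha)) ∧
    (lam * (if 0 ≤ alpha then (y : ℝ) else (x : ℝ)) ^ alpha ≤ 1 →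
      hitProb (absorbStep {s : Bool × ℕ | s.1 = true} (starStep n lam alpha))
          ((false : Bool), x) {((false : Bool), y)} ≤
        ENNReal.ofReal (Real.exp
          (-(((x : ℝ) - y) * (lam * (if 0 ≤ alpha then (y : ℝ) else (x : ℝ)) ^ alpha) / 2)))) := by
  have hdrop := hitProb_starStep_drop (alpha := alpha) hlam.le hyx.le hxn
  refine ⟨hdrop, fun hz => hdrop ▸ ENNReal.ofReal_le_ofReal ?_⟩
  have hcard : ((#(Icc (y + 1) x) : ℕ) : ℝ) = x - y := by
    rw [Nat.card_Icc, Nat.add_sub_add_right, Nat.cast_sub hyx.le]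
  rw [← hcard]
  refine prod_one_div_one_add_le_exp _ (by positivity) hz fun i hi => ?_
  rw [mem_Icc] at hi
  have hi0 : (0 : ℝ) < i := by exact_mod_cast (by omega : 0 < i)
  exact mul_le_mul_of_nonneg_left (ite_rpow_le_rpow (Nat.cast_nonneg y) hi0
    (by exact_mod_cast (by omega : y ≤ i)) (by exact_mod_cast hi.2) alpha) hlam.le

/-- Starting from x infected leaves and healthy center, the probability of
dropping to y infected leaves before the center gets infected equals
∏_{i=y+1}^{x} 1/(1+λi^α), and is at most exp(−(x−y)·λ·z^α/2) whenever λ·z^α ≤ 1,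
where z = y if α ≥ 0 and z = x otherwise. -/
theorem star_drop_probability (n x y : ℕ) (lam alpha : ℝ)
    (hn : 1 ≤ n) (hlam : 0 < lam) (ha : -1 < alpha) (hyx : y < x) (hxn : x ≤ n) :
    hitProb (absorbStep {s : Bool × ℕ | s.1 = true} (starStep n lam alpha))
        ((false : Bool), x) {((false : Bool), y)} =
      ENNReal.ofReal (∏ i ∈ Finset.Icc (y + 1) x, 1 / (1 + lam * (i : ℝ) ^ alpha)) ∧
    (lam * (if 0 ≤ alpha then (y : ℝ) else (x : ℝ)) ^ alpha ≤ 1 →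
      hitProb (absorbStep {s : Bool × ℕ | s.1 = true} (starStep n lam alpha))
          ((false : Bool), x) {((false : Bool), y)} ≤
        ENNReal.ofReal (Real.exp
          (-(((x : ℝ) - y) * (lam * (if 0 ≤ alpha then (y : ℝ) else (x : ℝ)) ^ alpha) / 2)))) :=
  star_drop_probability_general n x y lam alpha hlam hyx hxn
end
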